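/- arXiv:1408.4072 — 8 statements merged into one kernel-verified Lean document; each statement's English description precedes it below -/
import Mathlib

section
/- (Skyline members are never sandwiched) Suppose the accuracy function a is monotone and every per-feature cost is strictly positive (c f n > 0 for all f and all n ≥ 0). If F_i ⊊ F_j ⊆ F_k are feature sets with a(F_i) ≥ a(F_k), then F_j is not on the n₀-skyline for any n₀ ≥ 0. Consequently, for every n₀ the n₀-skyline is contained in the set of feature sets that are not strictly sandwiched in this way. -/
/-- Skyline members are never sandwiched: if `a` is monotone, per-feature
costs are strictly positive, `Fi ⊊ Fj ⊆ Fk` and `a(Fi) ≥ a(Fk)`, then `Fj` is not on the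
`n₀`-skyline for any `n₀ ≥ 0`. -/
theorem sandwiched_not_on_skyline {ι : Type*} [Fintype ι]
    (c : ι → ℝ → ℝ) (a : Finset ι → ℝ)
    (hmono : ∀ S T : Finset ι, S ⊆ T → a S ≤ a T)
    (hc : ∀ (f : ι) (n : ℝ), 0 ≤ n → 0 < c f n)
    (Fi Fj Fk : Finset ι) (hij : Fi ⊂ Fj) (hjk : Fj ⊆ Fk) (hacc : a Fk ≤ a Fi) :
    ∀ n₀ : ℝ, 0 ≤ n₀ →
      ¬ ((∀ T : Finset ι,
            ¬ (∑ f ∈ T, c f n₀ < ∑ f ∈ Fj, c f n₀ ∧ a Fj ≤ a T)) ∧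
         (∀ T : Finset ι,
            ¬ (∑ f ∈ T, c f n₀ ≤ ∑ f ∈ Fj, c f n₀ ∧ a Fj < a T))) := by
  intro n₀ hn₀ h
  obtain ⟨x, hxj, hxi⟩ := Finset.exists_of_ssubset hij
  have hcost : ∑ f ∈ Fi, c f n₀ < ∑ f ∈ Fj, c f n₀ :=
    Finset.sum_lt_sum_of_subset hij.subset hxj hxi (hc x n₀ hn₀)
      (fun f _ _ => (hc f n₀ hn₀).le)
  have haj : a Fj ≤ a Fi := le_trans (hmono Fj Fk hjk) hacc
  exact h.1 Fi ⟨hcost, haj⟩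
end

section
/- (Relaxed Sandwich Property) Suppose the accuracy function a satisfies relaxed monotonicity with error e ≥ 0 (S ⊆ T implies a(S) ≤ a(T) + e), every per-feature cost is nonnegative (c f n ≥ 0 for all f and all n ≥ 0), and α ≥ 1. If F_i ⊆ F_k and α·(a(F_i) − e) ≥ a(F_k), then every feature set F_j with F_i ⊆ F_j ⊆ F_k satisfies C(F_i,n) ≤ C(F_j,n) for all n ≥ 0 and α·a(F_i) ≥ a(F_j), i.e., F_i α-dominates F_j. -/
/-- Relaxed Sandwich Property: under relaxed monotonicity with error `e ≥ 0`,
nonnegative per-feature costs, and `α ≥ 1`, if `Fi ⊆ Fk` and `α·(a(Fi) − e) ≥ a(Fk)`, then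
every `Fj` with `Fi ⊆ Fj ⊆ Fk` is α-dominated by `Fi`. -/
theorem relaxed_sandwich_property {ι : Type*} [Fintype ι]
    (c : ι → ℝ → ℝ) (a : Finset ι → ℝ) (α e : ℝ) (hα : 1 ≤ α) (he : 0 ≤ e)
    (hmono : ∀ S T : Finset ι, S ⊆ T → a S ≤ a T + e)
    (hc : ∀ (f : ι) (n : ℝ), 0 ≤ n → 0 ≤ c f n)
    (Fi Fk : Finset ι) (hik : Fi ⊆ Fk) (hacc : a Fk ≤ α * (a Fi - e)) :
    ∀ Fj : Finset ι, Fi ⊆ Fj → Fj ⊆ Fk →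
      (∀ n : ℝ, 0 ≤ n → ∑ f ∈ Fi, c f n ≤ ∑ f ∈ Fj, c f n) ∧ a Fj ≤ α * a Fi := by
  intro Fj hij hjk
  constructor
  · intro n hn
    exact Finset.sum_le_sum_of_subset_of_nonneg hij (fun f _ _ => hc f n hn)
  · have h1 : a Fj ≤ a Fk + e := hmono Fj Fk hjk
    have h2 : α * (a Fi - e) + e ≤ α * a Fi := by nlinarith
    linarith
end

section
/- (Correctness of budget-constrained skyline retrieval) Let I be a finite index set with injective cost assignment C : I → ℝ and injective accuracy assignment a : I → ℝ, and skyline Sky(C) = {i ∈ I | ∀ j ∈ I, C(j) < C(i) → a(j) < a(i)}. Let b ∈ ℝ be a budget and suppose the feasible set Φ = {i ∈ I | C(i) ≤ b} is nonempty. Then (1) Sky(C) ∩ Φ is nonempty, and (2) if i* ∈ Sky(C) ∩ Φ has maximal cost among Sky(C) ∩ Φ (C(j) ≤ C(i*) for all j ∈ Sky(C) ∩ Φ), then a(j) ≤ a(i*) for every j ∈ Φ; i.e., the costliest feasible skyline element attains the maximum accuracy over all feasible elements. -/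
/-- Correctness of budget-constrained skyline retrieval: if the feasible
set is nonempty, then (1) some skyline element is feasible, and (2) the costliest feasible
skyline element attains the maximum accuracy over all feasible elements. -/
theorem budget_skyline_retrieval {I : Type*} [Fintype I]
    (C a : I → ℝ) (hC : Function.Injective C) (ha : Function.Injective a)
    (b : ℝ) (hfeas : ∃ i : I, C i ≤ b) :
    (∃ i : I, (∀ j : I, C j < C i → a j < a i) ∧ C i ≤ b) ∧
    (∀ istar : I,
        ((∀ j : I, C j < C istar → a j < a istar) ∧ C istar ≤ b) →
        (∀ j : I, ((∀ k : I, C k < C j → a k < a j) ∧ C j ≤ b) → C j ≤ C istar) →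
        ∀ j : I, C j ≤ b → a j ≤ a istar) := by
  classical
  obtain ⟨i0, hi0⟩ := hfeas
  set s : Finset I := Finset.univ.filter (fun i => C i ≤ b) with hs
  have hsne : s.Nonempty := ⟨i0, by simp [hs, hi0]⟩
  obtain ⟨m, hm, hmax⟩ := s.exists_max_image a hsne
  have hmfeas : C m ≤ b := by simpa [hs] using hm
  have hmsky : ∀ j : I, C j < C m → a j < a m := by
    intro j hj
    have hjfeas : C j ≤ b := le_trans hj.le hmfeas
    have hle : a j ≤ a m := hmax j (by simp [hs, hjfeas])
    have hne : a j ≠ a m := fun h => (ne_of_lt hj) (congrArg C (ha h))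
    exact lt_of_le_of_ne hle hne
  refine ⟨⟨m, hmsky, hmfeas⟩, ?_⟩
  intro istar ⟨hsky, hfeas'⟩ hcostmax j hj
  have hCm : C m ≤ C istar := hcostmax m ⟨hmsky, hmfeas⟩
  have hmeq : m = istar := by
    rcases lt_or_eq_of_le hCm with hlt | heq
    · exact absurd (hsky m hlt) (not_lt.mpr (hmax istar (by simp [hs, hfeas'])))
    · exact hC heq
  have := hmax j (by simp [hs, hj])
  rwa [hmeq] at this
end

section
/- (Intersection-point analysis, Scenario 1) In the swap setup, if both i₁ ∈ Sky(C) and i₂ ∈ Sky(C), then i₂ ∉ Sky(C'); in particular Sky(C') ≠ Sky(C), so the skyline changes at this intersection point. -/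
/-- Intersection-point analysis, Scenario 1: in the swap setup, if both
`i₁` and `i₂` are on the skyline before the intersection, then `i₂` leaves the skyline
after: `i₂ ∉ Sky(C')`, hence `Sky(C') ≠ Sky(C)`. -/
theorem intersection_scenario1 {I : Type*} [Fintype I]
    (i₁ i₂ : I) (hne : i₁ ≠ i₂)
    (a C C' : I → ℝ)
    (ha : Function.Injective a) (hC : Function.Injective C) (hC' : Function.Injective C')
    (hbefore : C i₂ < C i₁) (hafter : C' i₁ < C' i₂)
    (hswap : ∀ i j : I, i ≠ j → ({i, j} : Set I) ≠ ({i₁, i₂} : Set I) →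
      (C i < C j ↔ C' i < C' j))
    (h1 : i₁ ∈ {i : I | ∀ j : I, C j < C i → a j < a i})
    (h2 : i₂ ∈ {i : I | ∀ j : I, C j < C i → a j < a i}) :
    i₂ ∉ {i : I | ∀ j : I, C' j < C' i → a j < a i} ∧
    {i : I | ∀ j : I, C' j < C' i → a j < a i} ≠
      {i : I | ∀ j : I, C j < C i → a j < a i} := by
  have key : a i₂ < a i₁ := h1 i₂ hbefore
  have hnot : i₂ ∉ {i : I | ∀ j : I, C' j < C' i → a j < a i} := by
    intro h
    have := h i₁ hafter
    linarith
  exact ⟨hnot, fun heq => hnot (heq ▸ h2)⟩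
end

section
/- (Intersection-point analysis, Scenario 2, second case) In the swap setup, if i₂ ∈ Sky(C), i₁ ∉ Sky(C), and a(i₁) < a(i₂), then Sky(C') ≠ Sky(C) if and only if every j ∈ I with j ≠ i₁, j ≠ i₂, and C(j) < C(i₂) satisfies a(j) < a(i₁); moreover in that case the only change is that i₁ enters the skyline: Sky(C') = Sky(C) ∪ {i₁}. -/
/-- Intersection-point analysis, Scenario 2, second case: in the swap
setup, if `i₂ ∈ Sky(C)`, `i₁ ∉ Sky(C)`, and `a(i₁) < a(i₂)`, then the skyline changes iff
every other index cheaper than `i₂` (before the intersection) has accuracy below `a(i₁)`;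
and in that case the only change is that `i₁` enters: `Sky(C') = Sky(C) ∪ {i₁}`. -/
theorem intersection_scenario2_second {I : Type*} [Fintype I]
    (i₁ i₂ : I) (hne : i₁ ≠ i₂)
    (a C C' : I → ℝ)
    (ha : Function.Injective a) (hC : Function.Injective C) (hC' : Function.Injective C')
    (hbefore : C i₂ < C i₁) (hafter : C' i₁ < C' i₂)
    (hswap : ∀ i j : I, i ≠ j → ({i, j} : Set I) ≠ ({i₁, i₂} : Set I) →
      (C i < C j ↔ C' i < C' j))
    (h2 : i₂ ∈ {i : I | ∀ j : I, C j < C i → a j < a i})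
    (h1 : i₁ ∉ {i : I | ∀ j : I, C j < C i → a j < a i})
    (hacc : a i₁ < a i₂) :
    (({i : I | ∀ j : I, C' j < C' i → a j < a i} ≠
        {i : I | ∀ j : I, C j < C i → a j < a i}) ↔
      (∀ j : I, j ≠ i₁ → j ≠ i₂ → C j < C i₂ → a j < a i₁)) ∧
    ((∀ j : I, j ≠ i₁ → j ≠ i₂ → C j < C i₂ → a j < a i₁) →
      {i : I | ∀ j : I, C' j < C' i → a j < a i} =
        {i : I | ∀ j : I, C j < C i → a j < a i} ∪ {i₁}) := by
  classical
  have hpair : ∀ x y : I, x ≠ i₁ → x ≠ i₂ → ({x, y} : Set I) ≠ ({i₁, i₂} : Set I) := by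
    intro x y hx1 hx2 h
    have hx : x ∈ ({i₁, i₂} : Set I) := h ▸ Set.mem_insert x {y}
    simp only [Set.mem_insert_iff, Set.mem_singleton_iff] at hx
    tauto
  have hpair' : ∀ x y : I, y ≠ i₁ → y ≠ i₂ → ({x, y} : Set I) ≠ ({i₁, i₂} : Set I) := by
    intro x y hy1 hy2
    rw [Set.pair_comm]
    exact hpair y x hy1 hy2
  have e2 : ∀ j, j ≠ i₁ → j ≠ i₂ → (C j < C i₂ ↔ C' j < C' i₂) := fun j hj1 hj2 =>
    hswap j i₂ hj2 (hpair j i₂ hj1 hj2)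
  have e1 : ∀ j, j ≠ i₁ → j ≠ i₂ → (C j < C i₁ ↔ C' j < C' i₁) := fun j hj1 hj2 =>
    hswap j i₁ hj1 (hpair j i₁ hj1 hj2)
  have e2' : ∀ j, j ≠ i₁ → j ≠ i₂ → (C i₂ < C j ↔ C' i₂ < C' j) := fun j hj1 hj2 =>
    hswap i₂ j (fun h => hj2 h.symm) (hpair' i₂ j hj1 hj2)
  have hadj : ∀ j, j ≠ i₁ → j ≠ i₂ → (C j < C i₂ ↔ C j < C i₁) := by
    intro j hj1 hj2
    constructor
    · intro h; exact h.trans hbefore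
    · intro h
      by_contra hc
      have h3 : C i₂ < C j := by
        rcases lt_trichotomy (C j) (C i₂) with h' | h' | h'
        · exact absurd h' hc
        · exact absurd (hC h') hj2
        · exact h'
      have t1 := (e2' j hj1 hj2).mp h3
      have t2 := (e1 j hj1 hj2).mp h
      linarith
  have key : ∀ j, j ≠ i₁ → j ≠ i₂ → (C' j < C' i₁ ↔ C j < C i₂) := by
    intro j hj1 hj2
    rw [← e1 j hj1 hj2, ← hadj j hj1 hj2]
  have m1' : (i₁ ∈ {i : I | ∀ j : I, C' j < C' i → a j < a i}) ↔
      (∀ j : I, j ≠ i₁ → j ≠ i₂ → C j < C i₂ → a j < a i₁) := by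
    constructor
    · intro h j hj1 hj2 hc
      exact h j ((key j hj1 hj2).mpr hc)
    · intro hP j hj
      by_cases hj1 : j = i₁
      · subst hj1; exact absurd hj (lt_irrefl _)
      by_cases hj2 : j = i₂
      · subst hj2; linarith
      exact hP j hj1 hj2 ((key j hj1 hj2).mp hj)
  have m2' : i₂ ∈ {i : I | ∀ j : I, C' j < C' i → a j < a i} := by
    intro j hj
    by_cases hj1 : j = i₁
    · subst hj1; exact hacc
    by_cases hj2 : j = i₂
    · subst hj2; exact absurd hj (lt_irrefl _)
    exact h2 j ((e2 j hj1 hj2).mpr hj)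
  have mk : ∀ k, k ≠ i₁ → k ≠ i₂ →
      ((k ∈ {i : I | ∀ j : I, C' j < C' i → a j < a i}) ↔
       (k ∈ {i : I | ∀ j : I, C j < C i → a j < a i})) := by
    intro k hk1 hk2
    have hcheap : ∀ j, (C' j < C' k ↔ C j < C k) := by
      intro j
      by_cases hj1 : j = i₁
      · rw [hj1]; exact (hswap i₁ k (fun h => hk1 h.symm) (hpair' i₁ k hk1 hk2)).symm
      by_cases hj2 : j = i₂
      · rw [hj2]; exact (hswap i₂ k (fun h => hk2 h.symm) (hpair' i₂ k hk1 hk2)).symm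
      by_cases hjk : j = k
      · subst hjk; simp
      · exact (hswap j k hjk (hpair j k hj1 hj2)).symm
    constructor
    · intro h j hj; exact h j ((hcheap j).mpr hj)
    · intro h j hj; exact h j ((hcheap j).mp hj)
  have hsecond : (∀ j : I, j ≠ i₁ → j ≠ i₂ → C j < C i₂ → a j < a i₁) →
      {i : I | ∀ j : I, C' j < C' i → a j < a i} =
        {i : I | ∀ j : I, C j < C i → a j < a i} ∪ {i₁} := by
    intro hP
    ext i
    by_cases hi1 : i = i₁
    · subst hi1
      simp only [Set.mem_union, Set.mem_singleton_iff]
      exact ⟨fun _ => Or.inr (by simp), fun _ => m1'.mpr hP⟩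
    by_cases hi2 : i = i₂
    · subst hi2
      simp only [Set.mem_union, Set.mem_singleton_iff]
      exact ⟨fun _ => Or.inl h2, fun _ => m2'⟩
    · simp only [Set.mem_union, Set.mem_singleton_iff]
      rw [mk i hi1 hi2]
      exact ⟨Or.inl, fun h => h.elim id (fun h => absurd h hi1)⟩
  refine ⟨⟨fun hne' => ?_, fun hP => ?_⟩, hsecond⟩
  · by_contra hnP
    push_neg at hnP
    apply hne'
    ext i
    by_cases hi1 : i = i₁
    · subst hi1
      refine iff_of_false (fun h' => ?_) h1
      obtain ⟨j, hj1, hj2, hc, hle⟩ := hnP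
      exact absurd (m1'.mp h' j hj1 hj2 hc) (not_lt.mpr hle)
    by_cases hi2 : i = i₂
    · subst hi2; exact ⟨fun _ => h2, fun _ => m2'⟩
    · exact mk i hi1 hi2
  · rw [hsecond hP]
    intro h
    have : i₁ ∈ {i : I | ∀ j : I, C j < C i → a j < a i} := by
      rw [← h]; exact Set.mem_union_right _ rfl
    exact h1 this
end

section
/- (Intersection-point analysis, Scenario 3) In the swap setup, if i₁ ∉ Sky(C) and i₂ ∉ Sky(C), then Sky(C') = Sky(C); i.e., an intersection of two curves neither of which is on the skyline does not change the skyline. -/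
/-- Intersection-point analysis, Scenario 3: in the swap setup, if neither
`i₁` nor `i₂` is on the skyline before the intersection, the skyline does not change. -/
theorem intersection_scenario3 {I : Type*} [Fintype I]
    (i₁ i₂ : I) (hne : i₁ ≠ i₂)
    (a C C' : I → ℝ)
    (ha : Function.Injective a) (hC : Function.Injective C) (hC' : Function.Injective C')
    (hbefore : C i₂ < C i₁) (hafter : C' i₁ < C' i₂)
    (hswap : ∀ i j : I, i ≠ j → ({i, j} : Set I) ≠ ({i₁, i₂} : Set I) →
      (C i < C j ↔ C' i < C' j))
    (h1 : i₁ ∉ {i : I | ∀ j : I, C j < C i → a j < a i})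
    (h2 : i₂ ∉ {i : I | ∀ j : I, C j < C i → a j < a i}) :
    {i : I | ∀ j : I, C' j < C' i → a j < a i} =
      {i : I | ∀ j : I, C j < C i → a j < a i} := by
  -- witness for i₂
  simp only [Set.mem_setOf_eq, not_forall] at h1 h2
  obtain ⟨k, hk1, hk2⟩ := h2
  have hki₂ : k ≠ i₂ := fun h => lt_irrefl _ (h ▸ hk1)
  have hki₁ : k ≠ i₁ := by
    intro h; subst h; exact lt_asymm hk1 hbefore
  have hpair : ∀ m : I, m ≠ i₁ → m ≠ i₂ → ∀ n : I, ({m, n} : Set I) ≠ ({i₁, i₂} : Set I) := by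
    intro m hm1 hm2 n h
    have : m ∈ ({i₁, i₂} : Set I) := h ▸ Set.mem_insert m {n}
    rcases this with h | h
    · exact hm1 h
    · exact hm2 h
  have hpair' : ∀ m : I, m ≠ i₁ → m ≠ i₂ → ∀ n : I, ({n, m} : Set I) ≠ ({i₁, i₂} : Set I) := by
    intro m hm1 hm2 n h
    have : m ∈ ({i₁, i₂} : Set I) := h ▸ (Set.mem_insert_iff.mpr (Or.inr rfl))
    rcases this with h | h
    · exact hm1 h
    · exact hm2 h
  -- k beats i₂ under C' too
  have hk1' : C' k < C' i₂ := (hswap k i₂ hki₂ (hpair k hki₁ hki₂ i₂)).mp hk1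
  have hk1'' : C' k < C' i₁ := by
    have : C k < C i₁ := hk1.trans hbefore
    exact (hswap k i₁ hki₁ (hpair k hki₁ hki₂ i₁)).mp this
  -- k also beats i₁ accuracy-wise if needed
  obtain ⟨m, hm1, hm2⟩ := h1
  ext i
  simp only [Set.mem_setOf_eq]
  by_cases hi1 : i = i₁
  · subst hi1
    have hw : ∃ j, C' j < C' i ∧ ¬ a j < a i := by
      by_cases hmi₂ : m = i₂
      · rw [hmi₂] at hm1 hm2
        refine ⟨k, hk1'', ?_⟩
        have hai : a i < a i₂ := by
          rcases lt_or_gt_of_ne (fun h => hne (ha h)) with h | h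
          · exact h
          · exact absurd h hm2
        have : a i₂ ≤ a k := not_lt.mp hk2
        intro hlt; linarith
      · have hmi : m ≠ i := fun h => lt_irrefl _ (h ▸ hm1)
        exact ⟨m, (hswap m i hmi (hpair m hmi hmi₂ i)).mp hm1, hm2⟩
    obtain ⟨w, hw1, hw2⟩ := hw
    constructor
    · intro h; exact absurd (h w hw1) hw2
    · intro h; exact absurd (h m hm1) hm2
  · by_cases hi2 : i = i₂
    · subst hi2
      constructor
      · intro h; exact absurd (h k hk1') hk2
      · intro h; exact absurd (h k hk1) hk2
    · constructor
      · intro h j hj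
        by_cases hji : j = i
        · subst hji; exact absurd hj (lt_irrefl _)
        · exact h j ((hswap j i (hji) (hpair' i hi1 hi2 j)).mp hj)
      · intro h j hj
        by_cases hji : j = i
        · subst hji; exact absurd hj (lt_irrefl _)
        · exact h j ((hswap j i (hji) (hpair' i hi1 hi2 j)).mpr hj)
end

section
/- (Intersection-point analysis, Scenario 4) In the swap setup, if i₁ ∈ Sky(C) and i₂ ∉ Sky(C), then Sky(C') = Sky(C); i.e., when a skyline curve becomes cheaper by crossing below a non-skyline curve, the skyline does not change. (Note that the hypotheses force a(i₂) < a(i₁), since i₁ ∈ Sky(C) and C(i₂) < C(i₁).) -/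
/-- Intersection-point analysis, Scenario 4: in the swap setup, if
`i₁ ∈ Sky(C)` and `i₂ ∉ Sky(C)`, then the skyline does not change. -/
theorem intersection_scenario4 {I : Type*} [Fintype I]
    (i₁ i₂ : I) (hne : i₁ ≠ i₂)
    (a C C' : I → ℝ)
    (ha : Function.Injective a) (hC : Function.Injective C) (hC' : Function.Injective C')
    (hbefore : C i₂ < C i₁) (hafter : C' i₁ < C' i₂)
    (hswap : ∀ i j : I, i ≠ j → ({i, j} : Set I) ≠ ({i₁, i₂} : Set I) →
      (C i < C j ↔ C' i < C' j))
    (h1 : i₁ ∈ {i : I | ∀ j : I, C j < C i → a j < a i})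
    (h2 : i₂ ∉ {i : I | ∀ j : I, C j < C i → a j < a i}) :
    {i : I | ∀ j : I, C' j < C' i → a j < a i} =
      {i : I | ∀ j : I, C j < C i → a j < a i} := by
  have key : ∀ i j : I, i ≠ j → ¬(i = i₁ ∧ j = i₂) → ¬(i = i₂ ∧ j = i₁) →
      (C i < C j ↔ C' i < C' j) := by
    intro i j hij hA hB
    apply hswap i j hij
    intro hset
    have hi : i ∈ ({i₁, i₂} : Set I) := hset ▸ (by simp : i ∈ ({i, j} : Set I))
    have hj : j ∈ ({i₁, i₂} : Set I) := hset ▸ (by simp : j ∈ ({i, j} : Set I))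
    simp only [Set.mem_insert_iff, Set.mem_singleton_iff] at hi hj
    rcases hi with hi | hi <;> rcases hj with hj | hj
    · exact hij (hi.trans hj.symm)
    · exact hA ⟨hi, hj⟩
    · exact hB ⟨hi, hj⟩
    · exact hij (hi.trans hj.symm)
  ext i
  simp only [Set.mem_setOf_eq] at h1 h2 ⊢
  by_cases hi1 : i = i₁
  · subst hi1
    constructor
    · intro _; exact h1
    · intro _ j hj
      have hj1 : j ≠ i := by rintro rfl; exact lt_irrefl _ hj
      have hj2 : j ≠ i₂ := by rintro rfl; exact absurd hj (not_lt.2 hafter.le)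
      exact h1 j ((key j i hj1 (fun h => hne (h.2 ▸ rfl)) (fun h => hj2 h.1)).2 hj)
  · by_cases hi2 : i = i₂
    · subst hi2
      push_neg at h2
      obtain ⟨j, hjC, hja⟩ := h2
      constructor
      · intro hmem
        exfalso
        have hj2 : j ≠ i := by rintro rfl; exact lt_irrefl _ hjC
        have hj1 : j ≠ i₁ := by
          rintro rfl; exact lt_asymm hjC hbefore
        exact (not_lt.2 hja) (hmem j ((key j i hj2 (fun h => hj1 h.1) (fun h => hj2 h.1)).1 hjC))
      · intro hmem
        exact absurd (hmem j hjC) (not_lt.2 hja)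
    · constructor
      · intro hmem j hj
        rcases eq_or_ne j i with rfl | hji
        · exact absurd hj (lt_irrefl _)
        · exact hmem j ((key j i hji (fun h => hi2 h.2) (fun h => hi1 h.2)).1 hj)
      · intro hmem j hj
        rcases eq_or_ne j i with rfl | hji
        · exact absurd hj (lt_irrefl _)
        · exact hmem j ((key j i hji (fun h => hi2 h.2) (fun h => hi1 h.2)).2 hj)
end

section
/- (Earliest crossing is between adjacent curves, general version) Let I be a finite index set and for each i ∈ I let f_i : ℝ → ℝ be continuous. Let n₀ ∈ ℝ and suppose the values f_i(n₀) are pairwise distinct. Suppose t* > n₀ is such that some two curves agree at t* (∃ i ≠ j, f_i(t*) = f_j(t*)) and no two curves agree at any point of the open interval (n₀, t*). Then there exist distinct indices i, j with f_i(t*) = f_j(t*), f_i(n₀) < f_j(n₀), and no index k ∈ I with f_i(n₀) < f_k(n₀) < f_j(n₀); i.e., some pair of curves that intersect at t* are adjacent in the ordering of curve values at n₀. -/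
/-- Order preservation: if two curves never agree on `(n₀, t*)` and `f a n₀ < f b n₀`,
then `f a t* ≤ f b t*`. -/
lemma order_preserved {I : Type*} (f : I → ℝ → ℝ) (hf : ∀ i : I, Continuous (f i))
    (n₀ tstar : ℝ) (ht : n₀ < tstar)
    (hnone : ∀ x : ℝ, n₀ < x → x < tstar → ∀ i j : I, i ≠ j → f i x ≠ f j x)
    (a b : I) (hab : f a n₀ < f b n₀) : f a tstar ≤ f b tstar := by
  by_contra h
  push_neg at h
  set g : ℝ → ℝ := fun x => f b x - f a x with hg
  have hgc : Continuous g := (hf b).sub (hf a)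
  have h0 : (0 : ℝ) ∈ Set.Icc (g tstar) (g n₀) := by
    constructor <;> simp [hg] <;> linarith
  have := intermediate_value_Icc' (le_of_lt ht) hgc.continuousOn h0
  obtain ⟨x, hx, hx0⟩ := this
  have hne : a ≠ b := fun e => by rw [e] at hab; exact lt_irrefl _ hab
  have hxn : n₀ < x := by
    rcases lt_or_eq_of_le hx.1 with h' | h'
    · exact h'
    · exfalso; simp [hg, ← h'] at hx0; linarith
  have hxt : x < tstar := by
    rcases lt_or_eq_of_le hx.2 with h' | h'
    · exact h'
    · exfalso; simp [hg, h'] at hx0; linarith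
  exact hnone x hxn hxt a b hne (by simp [hg] at hx0; linarith)

/-- Earliest crossing is between adjacent curves, general version: if the
curve values at `n₀` are pairwise distinct, some two curves agree at `t* > n₀`, and no two
curves agree anywhere in `(n₀, t*)`, then some pair of curves that intersect at `t*` are
adjacent in the ordering of curve values at `n₀`. -/
theorem earliest_crossing_adjacent {I : Type*} [Fintype I]
    (f : I → ℝ → ℝ) (hf : ∀ i : I, Continuous (f i))
    (n₀ : ℝ) (hdist : ∀ i j : I, i ≠ j → f i n₀ ≠ f j n₀)
    (tstar : ℝ) (ht : n₀ < tstar)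
    (hcross : ∃ i j : I, i ≠ j ∧ f i tstar = f j tstar)
    (hnone : ∀ x : ℝ, n₀ < x → x < tstar → ∀ i j : I, i ≠ j → f i x ≠ f j x) :
    ∃ i j : I, i ≠ j ∧ f i tstar = f j tstar ∧ f i n₀ < f j n₀ ∧
      ¬ ∃ k : I, f i n₀ < f k n₀ ∧ f k n₀ < f j n₀ := by
  -- WLOG get i, j with f i n₀ < f j n₀ and f i t* = f j t*
  obtain ⟨i, j, hij, hcr⟩ := hcross
  have key : ∀ i j : I, f i tstar = f j tstar → f i n₀ < f j n₀ →
      ∃ i' j' : I, i' ≠ j' ∧ f i' tstar = f j' tstar ∧ f i' n₀ < f j' n₀ ∧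
      ¬ ∃ k : I, f i' n₀ < f k n₀ ∧ f k n₀ < f j' n₀ := by
    intro i j hcr hlt
    -- set of curves strictly above i (at n₀) but ≤ j
    set S : Finset I := Finset.univ.filter (fun m => f i n₀ < f m n₀ ∧ f m n₀ ≤ f j n₀) with hS
    have hjS : j ∈ S := by simp [hS, hlt]
    obtain ⟨k, hkS, hkmin⟩ := S.exists_min_image (fun m => f m n₀) ⟨j, hjS⟩
    simp only [hS, Finset.mem_filter, Finset.mem_univ, true_and] at hkS
    have hik : i ≠ k := fun e => by rw [← e] at hkS; exact lt_irrefl _ hkS.1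
    -- f i t* ≤ f k t* ≤ f j t* = f i t*
    have h1 : f i tstar ≤ f k tstar := order_preserved f hf n₀ tstar ht hnone i k hkS.1
    have h2 : f k tstar ≤ f j tstar := by
      rcases lt_or_eq_of_le hkS.2 with h' | h'
      · exact order_preserved f hf n₀ tstar ht hnone k j h'
      · have : k = j := by
          by_contra hne
          exact hdist k j hne h'
        rw [this]
    refine ⟨i, k, hik, le_antisymm h1 (h2.trans_eq hcr.symm), hkS.1, ?_⟩
    rintro ⟨m, hm1, hm2⟩
    have hmS : m ∈ S := by simp [hS, hm1, le_of_lt (hm2.trans_le hkS.2)]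
    have := hkmin m hmS
    linarith
  rcases lt_or_gt_of_ne (hdist i j hij) with h | h
  · exact key i j hcr h
  · exact key j i hcr.symm h
end
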